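/- Let A be an effect on a complex separable Hilbert space H such that 0 and 1 are not eigenvalues of A (i.e. ker A = {0} and ker(I − A) = {0}). Then the greatest lower bound A ∧ A' of A and A' = I − A within the partially ordered set of effects exists if and only if A ≤ I − A or I − A ≤ A, that is, if and only if A is irregular. -/

import Mathlib

open ContinuousLinearMap RCLike Filter Topology

variable {H : Type*} [NormedAddCommGroup H] [InnerProductSpace ℂ H] [CompleteSpace H]

local notation "⟪" x ", " y "⟫" => @inner ℂ _ _ x y

section AuxBump

/-- A triangular bump function centered at `c` with half-width `δ`. -/
noncomputable def auxBump (c δ : ℝ) : ℝ → ℝ := fun τ => max 0 (1 - |τ - c| / δ)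

lemma auxBump_cont (c δ : ℝ) : Continuous (auxBump c δ) := by
  unfold auxBump; fun_prop

lemma auxBump_nonneg (c δ τ : ℝ) : 0 ≤ auxBump c δ τ := le_max_left _ _

lemma auxBump_self {c δ : ℝ} (hδ : 0 < δ) : auxBump c δ c = 1 := by
  simp [auxBump]

lemma auxBump_supp {c δ τ : ℝ} (hδ : 0 < δ) (h : auxBump c δ τ ≠ 0) :
    c - δ < τ ∧ τ < c + δ := by
  by_contra hcon
  apply h
  have habs : δ ≤ |τ - c| := by
    rcases not_and_or.mp hcon with h1 | h1 <;> push_neg at h1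
    · rw [abs_sub_comm, abs_of_nonneg (by linarith)]; linarith
    · rw [abs_of_nonneg (by linarith)]; linarith
  have h1 : (1:ℝ) ≤ |τ - c| / δ := (one_le_div hδ).mpr habs
  exact max_eq_left (by linarith)

end AuxBump

lemma aux_re_comb2 (p q p' q' : H) (hpq : ⟪p, q'⟫ = 0) (hqp : ⟪q, p'⟫ = 0) (a b : ℝ) :
    re ⟪(a:ℂ) • p + (b:ℂ) • q, (a:ℂ) • p' + (b:ℂ) • q'⟫
      = a^2 * re ⟪p, p'⟫ + b^2 * re ⟪q, q'⟫ := by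
  simp only [inner_add_left, inner_add_right, inner_smul_left, inner_smul_right,
    Complex.conj_ofReal, hpq, hqp, mul_zero, add_zero, zero_add, map_add]
  have h1 : ∀ z : ℂ, re ((a:ℂ) * ((a:ℂ) * z)) = a^2 * re z := by
    intro z; simp [Complex.mul_re]; ring
  have h2 : ∀ z : ℂ, re ((b:ℂ) * ((b:ℂ) * z)) = b^2 * re z := by
    intro z; simp [Complex.mul_re]; ring
  rw [h1, h2]
lemma aux_inner_re_le {T S : H →L[ℂ] H} (h : T ≤ S) (x : H) :
    re ⟪T x, x⟫ ≤ re ⟪S x, x⟫ := by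
  have := ((le_def T S).mp h).2 x
  rw [reApplyInnerSelf_apply, sub_apply, inner_sub_left, map_sub] at this
  linarith

lemma aux_sa_inner {T : H →L[ℂ] H} (hT : IsSelfAdjoint T) (x y : H) :
    ⟪T x, y⟫ = ⟪x, T y⟫ :=
  (isSelfAdjoint_iff_isSymmetric.mp hT) x y

lemma aux_appmul (A : H →L[ℂ] H) (p q : ℝ → ℝ)
    (hp : Continuous p) (hq : Continuous q) (w : H) :
    cfc p A (cfc q A w) = cfc (fun τ => p τ * q τ) A w := by
  rw [cfc_mul p q A hp.continuousOn hq.continuousOn, ContinuousLinearMap.mul_apply]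

lemma aux_pair (A : H →L[ℂ] H) (p q : ℝ → ℝ)
    (hp : Continuous p) (hq : Continuous q) (w w' : H) :
    ⟪cfc p A w, cfc q A w'⟫ = ⟪cfc (fun τ => q τ * p τ) A w, w'⟫ := by
  rw [← aux_sa_inner (cfc_predicate q A) (cfc p A w) w',
    aux_appmul A q p hq hp w]

lemma aux_re_smul (r : ℝ) (T : H →L[ℂ] H) (w w' : H) :
    re ⟪(r • T) w, w'⟫ = r * re ⟪T w, w'⟫ := by
  rw [smul_apply]
  have : r • (T w) = (r : ℂ) • (T w) := (algebraMap_smul ℂ r (T w)).symm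
  rw [this, inner_smul_left, Complex.conj_ofReal]
  simp [Complex.mul_re]

lemma aux_quad_zero {T : H →L[ℂ] H} (hT : 0 ≤ T) {e f : H}
    (he : re ⟪T e, e⟫ = 0) (hf : re ⟪T f, f⟫ = 0) (a b : ℂ) :
    re ⟪T (a • e + b • f), a • e + b • f⟫ = 0 := by
  have hTpos := (nonneg_iff_isPositive T).mp hT
  have hTc := (isPositive_iff_complex T).mp hTpos
  have hee : ⟪T e, e⟫ = 0 := by
    have := (hTc e).1; rw [he] at this; simpa using this.symm
  have hff : ⟪T f, f⟫ = 0 := by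
    have := (hTc f).1; rw [hf] at this; simpa using this.symm
  have hsym := aux_sa_inner hTpos.isSelfAdjoint
  have hef : ⟪T e, f⟫ = (starRingEnd ℂ) ⟪T f, e⟫ := by
    rw [hsym e f, ← inner_conj_symm, hsym f e]
  have key : ∀ c : ℂ, 0 ≤ 2 * re ((starRingEnd ℂ) c * ⟪T f, e⟫) := by
    intro c
    have h1 := hTpos.2 (e + c • f)
    rw [reApplyInnerSelf_apply] at h1
    have expand : ⟪T (e + c • f), e + c • f⟫
        = ⟪T e, e⟫ + c * ⟪T e, f⟫ + (starRingEnd ℂ) c * ⟪T f, e⟫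
          + (starRingEnd ℂ) c * c * ⟪T f, f⟫ := by
      simp only [map_add, map_smul, inner_add_left, inner_add_right,
        inner_smul_left, inner_smul_right]
      ring
    rw [expand, hee, hff, hef] at h1
    simp only [zero_add, mul_zero, add_zero, map_add] at h1
    have hcc : re (c * (starRingEnd ℂ) ⟪T f, e⟫)
        = re ((starRingEnd ℂ) c * ⟪T f, e⟫) := by
      have : c * (starRingEnd ℂ) ⟪T f, e⟫
          = (starRingEnd ℂ) ((starRingEnd ℂ) c * ⟪T f, e⟫) := by
        rw [map_mul]; simp
      rw [this, RCLike.conj_re]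
    rw [hcc] at h1
    linarith
  have hz : ⟪T f, e⟫ = 0 := by
    have hk := key (-⟪T f, e⟫)
    rw [map_neg, neg_mul] at hk
    have h2 : re (-((starRingEnd ℂ) ⟪T f, e⟫ * ⟪T f, e⟫))
        = -Complex.normSq ⟪T f, e⟫ := by
      rw [← Complex.normSq_eq_conj_mul_self]; simp
    rw [h2] at hk
    exact Complex.normSq_eq_zero.mp
      (le_antisymm (by linarith) (Complex.normSq_nonneg _))
  have hz' : ⟪T e, f⟫ = 0 := by rw [hef, hz, map_zero]
  simp [map_add, map_smul, inner_add_left, inner_add_right,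
    inner_smul_left, inner_smul_right, hee, hff, hz, hz']
lemma aux_one_sub (A : H →L[ℂ] H) (hsa : IsSelfAdjoint A) :
    cfc (fun τ : ℝ => 1 - τ) A = 1 - A := by
  rw [cfc_sub (fun _ : ℝ => (1:ℝ)) (fun τ : ℝ => τ) A (by fun_prop) (by fun_prop),
    cfc_const_one ℝ A, cfc_id' ℝ A]

lemma aux_spec_le_one (A : H →L[ℂ] H) (hA1 : A ≤ 1) (hsa : IsSelfAdjoint A) :
    ∀ τ ∈ spectrum ℝ A, τ ≤ 1 := by
  intro τ hτ
  have h1A : (0 : H →L[ℂ] H) ≤ 1 - A := sub_nonneg.mpr hA1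
  have hmem : 1 - τ ∈ spectrum ℝ (1 - A) := by
    rw [← aux_one_sub A hsa, cfc_map_spectrum (fun τ : ℝ => 1 - τ) A hsa (by fun_prop)]
    exact ⟨τ, hτ, rfl⟩
  have := spectrum_nonneg_of_nonneg h1A hmem
  linarith

lemma aux_one_notin_spec_zero : (1:ℝ) ∉ spectrum ℝ (0 : H →L[ℂ] H) := by
  intro h
  have := spectrum.mem_iff.mp h
  apply this
  simpa using isUnit_one

lemma aux_spec_high (A : H →L[ℂ] H) (hA0 : 0 ≤ A) (hA1 : A ≤ 1)
    (hker1 : LinearMap.ker ((1 - A : H →L[ℂ] H) : H →ₗ[ℂ] H) = ⊥) (hreg : ¬ A ≤ 1 - A) :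
    ∃ s ∈ spectrum ℝ A, 1/2 < s ∧ s < 1 := by
  have hsa : IsSelfAdjoint A := ((nonneg_iff_isPositive A).mp hA0).isSelfAdjoint
  by_contra hcon
  push_neg at hcon
  by_cases hall : ∀ τ ∈ spectrum ℝ A, τ ≤ 1/2
  · apply hreg
    have : cfc (fun τ : ℝ => τ) A ≤ cfc (fun τ : ℝ => 1 - τ) A := by
      apply cfc_mono (fun τ hτ => by clear hreg; have := hall τ hτ; linarith) (by fun_prop) (by fun_prop)
    rwa [cfc_id' ℝ A, aux_one_sub A hsa] at this
  · push_neg at hall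
    obtain ⟨τ₀, hτ₀mem, hτ₀⟩ := hall
    have hτ1 : τ₀ = 1 :=
      le_antisymm (aux_spec_le_one A hA1 hsa τ₀ hτ₀mem) (hcon τ₀ hτ₀mem (by clear hreg; linarith))
    have h1mem : (1:ℝ) ∈ spectrum ℝ A := hτ1 ▸ hτ₀mem
    set q : ℝ → ℝ := fun τ => max 0 (2*τ - 1) with hq
    have hqcont : Continuous q := by fun_prop
    have hq0 : cfc (fun τ : ℝ => (1 - τ) * q τ) A = 0 := by
      rw [show (fun τ : ℝ => (1 - τ) * q τ) = fun τ : ℝ => (1 - τ) * q τ from rfl]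
      rw [cfc_congr (g := fun _ : ℝ => (0:ℝ)) ?eq, cfc_const_zero]
      case eq =>
        intro τ hτ
        rcases le_or_gt τ (1/2) with hle | hlt
        · have : q τ = 0 := max_eq_left (by clear hreg; linarith)
          simp [this]
        · have : τ = 1 := le_antisymm (aux_spec_le_one A hA1 hsa τ hτ) (hcon τ hτ hlt)
          simp [this]
    have hmul : (1 - A) * cfc q A = 0 := by
      rw [← aux_one_sub A hsa, ← cfc_mul (fun τ : ℝ => 1 - τ) q A (by fun_prop) (by fun_prop)]
      exact hq0
    have hqA : cfc q A = 0 := by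
      ext w
      have happ : (1 - A) (cfc q A w) = 0 := by
        rw [← ContinuousLinearMap.mul_apply, hmul, zero_apply]
      have hmem : cfc q A w ∈ LinearMap.ker ((1 - A : H →L[ℂ] H) : H →ₗ[ℂ] H) := LinearMap.mem_ker.mpr happ
      rw [hker1] at hmem
      simpa using hmem
    have hmem : (1:ℝ) ∈ spectrum ℝ (cfc q A) := by
      rw [cfc_map_spectrum q A hsa hqcont.continuousOn]
      exact ⟨1, h1mem, by norm_num [hq]⟩
    rw [hqA] at hmem
    exact aux_one_notin_spec_zero hmem

lemma aux_spec_low (A : H →L[ℂ] H) (hA0 : 0 ≤ A) (hA1 : A ≤ 1)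
    (hker0 : LinearMap.ker (A : H →ₗ[ℂ] H) = ⊥) (hreg : ¬ 1 - A ≤ A) :
    ∃ t ∈ spectrum ℝ A, 0 < t ∧ t < 1/2 := by
  have hsa : IsSelfAdjoint A := ((nonneg_iff_isPositive A).mp hA0).isSelfAdjoint
  by_contra hcon
  push_neg at hcon
  by_cases hall : ∀ τ ∈ spectrum ℝ A, 1/2 ≤ τ
  · apply hreg
    have : cfc (fun τ : ℝ => 1 - τ) A ≤ cfc (fun τ : ℝ => τ) A := by
      apply cfc_mono (fun τ hτ => by clear hreg; have := hall τ hτ; linarith) (by fun_prop) (by fun_prop)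
    rwa [cfc_id' ℝ A, aux_one_sub A hsa] at this
  · push_neg at hall
    obtain ⟨τ₀, hτ₀mem, hτ₀⟩ := hall
    have hτ0 : τ₀ = 0 := by
      have h1 := spectrum_nonneg_of_nonneg hA0 hτ₀mem
      rcases eq_or_lt_of_le h1 with h | h
      · exact h.symm
      · exact absurd (hcon τ₀ hτ₀mem h) (by clear hreg; push_neg; linarith)
    have h0mem : (0:ℝ) ∈ spectrum ℝ A := hτ0 ▸ hτ₀mem
    set q : ℝ → ℝ := fun τ => max 0 (1 - 2*τ) with hq
    have hqcont : Continuous q := by fun_prop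
    have hq0 : cfc (fun τ : ℝ => τ * q τ) A = 0 := by
      rw [cfc_congr (g := fun _ : ℝ => (0:ℝ)) ?eq, cfc_const_zero]
      case eq =>
        intro τ hτ
        rcases lt_or_ge τ (1/2) with hlt | hle
        · have h1 := spectrum_nonneg_of_nonneg hA0 hτ
          have : τ = 0 := by
            rcases eq_or_lt_of_le h1 with h | h
            · exact h.symm
            · exact absurd (hcon τ hτ h) (by clear hreg; push_neg; linarith)
          simp [this]
        · have : q τ = 0 := max_eq_left (by clear hreg; linarith)
          simp [this]
    have hmul : A * cfc q A = 0 := by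
      have heq : cfc (fun τ : ℝ => τ * q τ) A = A * cfc q A := by
        rw [cfc_mul (fun τ : ℝ => τ) q A (by fun_prop) (by fun_prop), cfc_id' ℝ A]
      rw [← heq]; exact hq0
    have hqA : cfc q A = 0 := by
      ext w
      have happ : A (cfc q A w) = 0 := by
        rw [← ContinuousLinearMap.mul_apply, hmul, zero_apply]
      have hmem : cfc q A w ∈ LinearMap.ker (A : H →ₗ[ℂ] H) := LinearMap.mem_ker.mpr happ
      rw [hker0] at hmem
      simpa using hmem
    have hmem : (1:ℝ) ∈ spectrum ℝ (cfc q A) := by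
      rw [cfc_map_spectrum q A hsa hqcont.continuousOn]
      exact ⟨0, h0mem, by norm_num [hq]⟩
    rw [hqA] at hmem
    exact aux_one_notin_spec_zero hmem

lemma aux_delta (s t : ℝ) (ht0 : 0 < t) (ht : t < 1/2) (hs : 1/2 < s) (hs1 : s < 1) :
    ∃ x y δ : ℝ, 0 < x ∧ 0 < y ∧ 0 < δ ∧ δ < t ∧ t + δ < 1/2 ∧ 1/2 < s - δ ∧ s + δ < 1 ∧
      (x*(1-s+δ)+y*(t+δ)) * (x*(t-δ) + y*(s-δ)) < (s-δ)*(t-δ)*(x+y)^2 ∧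
      (x*(1-s+δ)+y*(t+δ)) * (x*(1-t-δ) + y*(1-s-δ)) < (1-s-δ)*(1-t-δ)*(x+y)^2 := by
  set x : ℝ := s*(1-s)*(1-2*t) with hxdef
  set y : ℝ := t*(1-t)*(2*s-1) with hydef
  have hx : 0 < x := by
    apply mul_pos (mul_pos (by linarith) (by linarith)) (by linarith)
  have hy : 0 < y := by
    apply mul_pos (mul_pos (by linarith) (by linarith)) (by linarith)
  have hst : 0 < s - t := by linarith
  have key1 : (x*(1-s)+y*t) * (x*t + y*s) < s*t*(x+y)^2 := by
    have hid : s*t*(x+y)^2 - (x*(1-s)+y*t) * (x*t + y*s)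
        = (s*(t*t)) * ((s-t)*((2*s-1)*((1-2*t)*((1-s)*(1+s-t))))) := by
      rw [hxdef, hydef]; ring
    have hpos : 0 < (s*(t*t)) * ((s-t)*((2*s-1)*((1-2*t)*((1-s)*(1+s-t))))) := by
      apply mul_pos (mul_pos (by linarith) (mul_pos ht0 ht0))
      apply mul_pos hst
      apply mul_pos (by linarith)
      apply mul_pos (by linarith)
      apply mul_pos (by linarith) (by linarith)
    linarith
  have key2 : (x*(1-s)+y*t) * (x*(1-t) + y*(1-s)) < (1-s)*(1-t)*(x+y)^2 := by
    have hid : (1-s)*(1-t)*(x+y)^2 - (x*(1-s)+y*t) * (x*(1-t) + y*(1-s))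
        = ((1-s)*((1-s)*(1-t))) * ((s-t)*((2*s-1)*((1-2*t)*(t*(1+s-t))))) := by
      rw [hxdef, hydef]; ring
    have hpos : 0 < ((1-s)*((1-s)*(1-t))) * ((s-t)*((2*s-1)*((1-2*t)*(t*(1+s-t))))) := by
      apply mul_pos (mul_pos (by linarith) (mul_pos (by linarith) (by linarith)))
      apply mul_pos hst
      apply mul_pos (by linarith)
      apply mul_pos (by linarith)
      apply mul_pos ht0 (by linarith)
    linarith
  -- continuity in δ
  have e1 : ∀ᶠ δ in 𝓝 (0:ℝ),
      (x*(1-s+δ)+y*(t+δ)) * (x*(t-δ) + y*(s-δ)) < (s-δ)*(t-δ)*(x+y)^2 := by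
    have hc1 : ContinuousAt (fun δ : ℝ => (x*(1-s+δ)+y*(t+δ)) * (x*(t-δ) + y*(s-δ))) 0 := by
      fun_prop
    have hc2 : ContinuousAt (fun δ : ℝ => (s-δ)*(t-δ)*(x+y)^2) 0 := by fun_prop
    have h0 : (fun δ : ℝ => (x*(1-s+δ)+y*(t+δ)) * (x*(t-δ) + y*(s-δ))) 0
        < (fun δ : ℝ => (s-δ)*(t-δ)*(x+y)^2) 0 := by
      simpa using key1
    exact hc1.eventually_lt hc2 h0
  have e2 : ∀ᶠ δ in 𝓝 (0:ℝ),
      (x*(1-s+δ)+y*(t+δ)) * (x*(1-t-δ) + y*(1-s-δ)) < (1-s-δ)*(1-t-δ)*(x+y)^2 := by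
    have hc1 : ContinuousAt (fun δ : ℝ => (x*(1-s+δ)+y*(t+δ)) * (x*(1-t-δ) + y*(1-s-δ))) 0 := by
      fun_prop
    have hc2 : ContinuousAt (fun δ : ℝ => (1-s-δ)*(1-t-δ)*(x+y)^2) 0 := by fun_prop
    have h0 : (fun δ : ℝ => (x*(1-s+δ)+y*(t+δ)) * (x*(1-t-δ) + y*(1-s-δ))) 0
        < (fun δ : ℝ => (1-s-δ)*(1-t-δ)*(x+y)^2) 0 := by
      simpa using key2
    exact hc1.eventually_lt hc2 h0
  have e3 : ∀ᶠ δ in 𝓝 (0:ℝ), δ < t := Iio_mem_nhds ht0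
  have e4 : ∀ᶠ δ in 𝓝 (0:ℝ), δ < 1/2 - t := Iio_mem_nhds (by linarith)
  have e5 : ∀ᶠ δ in 𝓝 (0:ℝ), δ < s - 1/2 := Iio_mem_nhds (by linarith)
  have e6 : ∀ᶠ δ in 𝓝 (0:ℝ), δ < 1 - s := Iio_mem_nhds (by linarith)
  have eAll := (((((e1.and e2).and e3).and e4).and e5).and e6).filter_mono
    (nhdsWithin_le_nhds (s := Set.Ioi (0:ℝ)))
  obtain ⟨δ, hδprop, hδpos⟩ := (eAll.and self_mem_nhdsWithin).exists
  obtain ⟨⟨⟨⟨⟨h1, h2⟩, h3⟩, h4⟩, h5⟩, h6⟩ := hδprop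
  exact ⟨x, y, δ, hx, hy, hδpos, h3, by linarith, by linarith, by linarith, h1, h2⟩

/-- `C` is the greatest lower bound of `A` and `B` within the poset of effects. -/
def IsGLBWithinEffects (A B C : H →L[ℂ] H) : Prop :=
  (0 ≤ C ∧ C ≤ 1) ∧ C ≤ A ∧ C ≤ B ∧
    ∀ D : H →L[ℂ] H, 0 ≤ D → D ≤ 1 → D ≤ A → D ≤ B → D ≤ C

set_option maxHeartbeats 1600000 in
/-- if `0` and `1` are not eigenvalues of the effect `A`, then
`A ∧ A'` exists within the effects iff `A` is irregular. -/
theorem effect_inf_complement_exists_iff_irregular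
    [TopologicalSpace.SeparableSpace H]
    (A : H →L[ℂ] H) (hA0 : 0 ≤ A) (hA1 : A ≤ 1)
    (hker0 : LinearMap.ker (A : H →ₗ[ℂ] H) = ⊥) (hker1 : LinearMap.ker ((1 - A : H →L[ℂ] H) : H →ₗ[ℂ] H) = ⊥) :
    (∃ C : H →L[ℂ] H, IsGLBWithinEffects A (1 - A) C) ↔ (A ≤ 1 - A ∨ 1 - A ≤ A) := by
  constructor
  · rintro ⟨C, ⟨⟨hC0, hC1⟩, hCA, hCA', hglb⟩⟩
    by_contra hreg
    push_neg at hreg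
    obtain ⟨hreg1, hreg2⟩ := hreg
    have hsa : IsSelfAdjoint A := ((nonneg_iff_isPositive A).mp hA0).isSelfAdjoint
    obtain ⟨s, hsmem, hs12, hs1⟩ := aux_spec_high A hA0 hA1 hker1 hreg1
    obtain ⟨t, htmem, ht0, ht12⟩ := aux_spec_low A hA0 hA1 hker0 hreg2
    clear hreg1 hreg2
    obtain ⟨x, y, δ, hx, hy, hδ, hδt, htδ, hsδ, hsδ1, K1, K2⟩ :=
      aux_delta s t ht0 ht12 hs12 hs1
    -- abbreviations for the functions used through the continuous functional calculus
    set φe : ℝ → ℝ := auxBump s δ with hφe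
    set φf : ℝ → ℝ := auxBump t δ with hφf
    have hφe_cont : Continuous φe := auxBump_cont s δ
    have hφf_cont : Continuous φf := auxBump_cont t δ
    have hφe_nonneg : ∀ τ, 0 ≤ φe τ := auxBump_nonneg s δ
    have hφf_nonneg : ∀ τ, 0 ≤ φf τ := auxBump_nonneg t δ
    have suppE : ∀ τ, φe τ ≠ 0 → s - δ < τ ∧ τ < s + δ := fun τ h => auxBump_supp hδ h
    have suppF : ∀ τ, φf τ ≠ 0 → t - δ < τ ∧ τ < t + δ := fun τ h => auxBump_supp hδ h
    set m : ℝ → ℝ := fun τ => min τ (1 - τ) with hm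
    have hm_cont : Continuous m := continuous_id.min (by fun_prop)
    set sq : ℝ → ℝ := Real.sqrt with hsq
    have hsq_cont : Continuous sq := Real.continuous_sqrt
    set sq' : ℝ → ℝ := fun τ => Real.sqrt (1 - τ) with hsq'
    have hsq'_cont : Continuous sq' := Real.continuous_sqrt.comp (by fun_prop)
    set hE : ℝ → ℝ := fun τ => φe τ / Real.sqrt (max τ (s - δ)) with hhE
    set hF : ℝ → ℝ := fun τ => φf τ / Real.sqrt (max τ (t - δ)) with hhF
    set kE : ℝ → ℝ := fun τ => φe τ / Real.sqrt (max (1 - τ) (1 - s - δ)) with hkE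
    set kF : ℝ → ℝ := fun τ => φf τ / Real.sqrt (max (1 - τ) (1 - t - δ)) with hkF
    have hE_cont : Continuous hE := by
      apply hφe_cont.div (Real.continuous_sqrt.comp (continuous_id.max continuous_const))
      intro τ
      exact ne_of_gt (Real.sqrt_pos.mpr (lt_of_lt_of_le (by linarith) (le_max_right _ _)))
    have hF_cont : Continuous hF := by
      apply hφf_cont.div (Real.continuous_sqrt.comp (continuous_id.max continuous_const))
      intro τ
      exact ne_of_gt (Real.sqrt_pos.mpr (lt_of_lt_of_le (by linarith) (le_max_right _ _)))
    have kE_cont : Continuous kE := by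
      apply hφe_cont.div
        (Real.continuous_sqrt.comp ((continuous_const.sub continuous_id).max continuous_const))
      intro τ
      exact ne_of_gt (Real.sqrt_pos.mpr (lt_of_lt_of_le (by linarith) (le_max_right _ _)))
    have kF_cont : Continuous kF := by
      apply hφf_cont.div
        (Real.continuous_sqrt.comp ((continuous_const.sub continuous_id).max continuous_const))
      intro τ
      exact ne_of_gt (Real.sqrt_pos.mpr (lt_of_lt_of_le (by linarith) (le_max_right _ _)))
    have hdisj : ∀ τ, φe τ = 0 ∨ φf τ = 0 := by
      intro τ
      by_contra hcon
      push_neg at hcon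
      have h1 := (suppE τ hcon.1).1
      have h2 := (suppF τ hcon.2).2
      linarith
    -- the inner product engine
    have qmono : ∀ (F G : ℝ → ℝ), Continuous F → Continuous G → (∀ τ, F τ ≤ G τ) →
        ∀ w : H, re ⟪cfc F A w, w⟫ ≤ re ⟪cfc G A w, w⟫ := fun F G hF' hG' hle w =>
      aux_inner_re_le (cfc_mono (fun τ _ => hle τ) hF'.continuousOn hG'.continuousOn) w
    have qzero : ∀ (F : ℝ → ℝ), (∀ τ, F τ = 0) → ∀ (w w' : H), ⟪cfc F A w, w'⟫ = 0 := by
      intro F hF' w w'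
      rw [show F = (fun _ : ℝ => (0:ℝ)) from funext hF', cfc_const_zero ℝ A]
      simp
    have qscale : ∀ (r : ℝ) (F : ℝ → ℝ), Continuous F → ∀ (w w' : H),
        re ⟪cfc (fun τ => r * F τ) A w, w'⟫ = r * re ⟪cfc F A w, w'⟫ := by
      intro r F hF' w w'
      rw [cfc_const_mul r F A hF'.continuousOn, aux_re_smul]
    have crossz0 : ∀ (p q : ℝ → ℝ), Continuous p → Continuous q →
        (∀ τ, q τ * p τ = 0) → ∀ w w' : H, ⟪cfc p A w, cfc q A w'⟫ = 0 := by
      intro p q hp hq h w w'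
      rw [aux_pair A p q hp hq w w']
      exact qzero _ h w w'
    have sand : ∀ (p F : ℝ → ℝ), Continuous p → Continuous F → ∀ w : H,
        ⟪cfc F A (cfc p A w), cfc p A w⟫ = ⟪cfc (fun τ => p τ * (F τ * p τ)) A w, w⟫ := by
      intro p F hp hF' w
      rw [aux_appmul A F p hF' hp w, aux_pair A (fun τ => F τ * p τ) p (hF'.mul hp) hp w w]
    -- the unit vectors e and f in the spectral subspaces
    have build : ∀ (c : ℝ), c ∈ spectrum ℝ A →
        ∃ w : H, ‖cfc (auxBump c δ) A w‖ = 1 := by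
      intro c hc
      have hbc : Continuous (auxBump c δ) := auxBump_cont c δ
      have hne : cfc (auxBump c δ) A ≠ 0 := by
        intro h0
        have hmem : (1:ℝ) ∈ spectrum ℝ (cfc (auxBump c δ) A) := by
          rw [cfc_map_spectrum (auxBump c δ) A hsa hbc.continuousOn]
          exact ⟨c, hc, auxBump_self hδ⟩
        rw [h0] at hmem
        exact aux_one_notin_spec_zero hmem
      obtain ⟨w₀, hw₀⟩ : ∃ w, cfc (auxBump c δ) A w ≠ 0 := by
        by_contra hcon
        push_neg at hcon
        exact hne (ContinuousLinearMap.ext fun w => by simpa using hcon w)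
      refine ⟨((‖cfc (auxBump c δ) A w₀‖ : ℝ) : ℂ)⁻¹ • w₀, ?_⟩
      have hr : ‖cfc (auxBump c δ) A w₀‖ ≠ 0 := norm_ne_zero_iff.mpr hw₀
      rw [map_smul, norm_smul, norm_inv, Complex.norm_real, Real.norm_eq_abs,
        abs_of_nonneg (norm_nonneg _), inv_mul_cancel₀ hr]
    obtain ⟨we, he_norm⟩ := build s hsmem
    obtain ⟨wf, hf_norm⟩ := build t htmem
    set e : H := cfc φe A we with hedef
    set f : H := cfc φf A wf with hfdef
    -- basic quadratic quantities
    have hee_cfc : re ⟪cfc (fun τ => φe τ * φe τ) A we, we⟫ = 1 := by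
      rw [← aux_pair A φe φe hφe_cont hφe_cont we we, ← hedef]
      rw [inner_self_eq_norm_sq, he_norm]; norm_num
    have hff_cfc : re ⟪cfc (fun τ => φf τ * φf τ) A wf, wf⟫ = 1 := by
      rw [← aux_pair A φf φf hφf_cont hφf_cont wf wf, ← hfdef]
      rw [inner_self_eq_norm_sq, hf_norm]; norm_num
    have hef : ⟪e, f⟫ = 0 := by
      rw [hedef, hfdef]
      apply crossz0 φe φf hφe_cont hφf_cont
      intro τ; rcases hdisj τ with h | h <;> simp [h]
    have hfe : ⟪f, e⟫ = 0 := by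
      rw [hedef, hfdef]
      apply crossz0 φf φe hφf_cont hφe_cont
      intro τ; rcases hdisj τ with h | h <;> simp [h]
    -- the operator M = min (A, 1 - A) via functional calculus
    have hone_sub := aux_one_sub A hsa
    set M : H →L[ℂ] H := cfc m A with hMdef
    have spec0 : ∀ τ ∈ spectrum ℝ A, 0 ≤ τ := fun τ hτ => spectrum_nonneg_of_nonneg hA0 hτ
    have spec1 : ∀ τ ∈ spectrum ℝ A, τ ≤ 1 := aux_spec_le_one A hA1 hsa
    have hM0 : 0 ≤ M := cfc_nonneg fun τ hτ =>
      le_min (spec0 τ hτ) (by have := spec1 τ hτ; linarith)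
    have hMA : M ≤ A := by
      have h1 : cfc m A ≤ cfc (fun τ : ℝ => τ) A :=
        cfc_mono (fun τ _ => min_le_left _ _) (hm_cont.continuousOn) (by fun_prop)
      rwa [cfc_id' ℝ A] at h1
    have hMA' : M ≤ 1 - A := by
      have h1 : cfc m A ≤ cfc (fun τ : ℝ => 1 - τ) A :=
        cfc_mono (fun τ _ => min_le_right _ _) (hm_cont.continuousOn) (by fun_prop)
      rwa [hone_sub] at h1
    have hM1 : M ≤ 1 := hMA.trans hA1
    have hMC : M ≤ C := hglb M hM0 hM1 hMA hMA'
    have hCM0 : 0 ≤ C - M := sub_nonneg.mpr hMC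
    -- diagonal bounds for M
    have hMe : re ⟪M e, e⟫ ≤ 1 - s + δ := by
      rw [hMdef, hedef, sand φe m hφe_cont hm_cont we]
      have h1 : ∀ τ, φe τ * (m τ * φe τ) ≤ (1 - s + δ) * (φe τ * φe τ) := by
        intro τ
        rcases eq_or_ne (φe τ) 0 with h | h
        · simp [h]
        · obtain ⟨hl, hr⟩ := suppE τ h
          have hmm : m τ = 1 - τ := min_eq_right (by linarith)
          have hb := hφe_nonneg τ
          have h2 : m τ ≤ 1 - s + δ := by rw [hmm]; linarith
          nlinarith [mul_nonneg hb hb]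
      calc re ⟪cfc (fun τ => φe τ * (m τ * φe τ)) A we, we⟫
          ≤ re ⟪cfc (fun τ => (1 - s + δ) * (φe τ * φe τ)) A we, we⟫ :=
            qmono _ _ (by fun_prop) (by fun_prop) h1 we
        _ = 1 - s + δ := by
            rw [qscale _ (fun τ => φe τ * φe τ) (hφe_cont.mul hφe_cont) we we, hee_cfc, mul_one]
    have hMf : re ⟪M f, f⟫ ≤ t + δ := by
      rw [hMdef, hfdef, sand φf m hφf_cont hm_cont wf]
      have h1 : ∀ τ, φf τ * (m τ * φf τ) ≤ (t + δ) * (φf τ * φf τ) := by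
        intro τ
        rcases eq_or_ne (φf τ) 0 with h | h
        · simp [h]
        · obtain ⟨hl, hr⟩ := suppF τ h
          have hmm : m τ ≤ t + δ := by
            exact le_trans (min_le_left _ _) (by linarith)
          have hb := hφf_nonneg τ
          nlinarith [mul_nonneg hb hb]
      calc re ⟪cfc (fun τ => φf τ * (m τ * φf τ)) A wf, wf⟫
          ≤ re ⟪cfc (fun τ => (t + δ) * (φf τ * φf τ)) A wf, wf⟫ :=
            qmono _ _ (by fun_prop) (by fun_prop) h1 wf
        _ = t + δ := by
            rw [qscale _ (fun τ => φf τ * φf τ) (hφf_cont.mul hφf_cont) wf wf, hff_cfc, mul_one]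
    have hMef : ⟪M e, f⟫ = 0 := by
      rw [hMdef, hedef, hfdef, aux_appmul A m φe hm_cont hφe_cont we]
      apply crossz0 _ φf (hm_cont.mul hφe_cont) hφf_cont
      intro τ
      rcases hdisj τ with h | h <;> simp [h]
    have hMfe : ⟪M f, e⟫ = 0 := by
      rw [hMdef, hedef, hfdef, aux_appmul A m φf hm_cont hφf_cont wf]
      apply crossz0 _ φe (hm_cont.mul hφf_cont) hφe_cont
      intro τ
      rcases hdisj τ with h | h <;> simp [h]
    -- (C - M) vanishes on e and f
    have dE : re ⟪(C - M) e, e⟫ = 0 := by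
      have hub : re ⟪(C - M) e, e⟫ ≤ 0 := by
        have h1 : re ⟪C e, e⟫ ≤ re ⟪(1 - A) e, e⟫ := aux_inner_re_le hCA' e
        have h2 : re ⟪(1 - A) e, e⟫ - re ⟪M e, e⟫ = 0 := by
          have hop : (1 - A) - M = cfc (fun τ => (1 - τ) - m τ) A := by
            rw [cfc_sub (fun τ : ℝ => 1 - τ) m A (by fun_prop) hm_cont.continuousOn,
              hone_sub, hMdef]
          have h3 : re ⟪((1 - A) - M) e, e⟫ = 0 := by
            rw [hop, hedef, sand φe _ hφe_cont (by fun_prop) we]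
            rw [qzero _ ?hz we we, map_zero]
            case hz =>
              intro τ
              rcases eq_or_ne (φe τ) 0 with h | h
              · simp [h]
              · obtain ⟨hl, hr⟩ := suppE τ h
                have hmm : m τ = 1 - τ := min_eq_right (by linarith)
                rw [hmm]; ring
          rw [sub_apply, inner_sub_left, map_sub] at h3
          linarith
        have h4 : re ⟪(C - M) e, e⟫ = re ⟪C e, e⟫ - re ⟪M e, e⟫ := by
          rw [sub_apply, inner_sub_left, map_sub]
        linarith
      have hlb : 0 ≤ re ⟪(C - M) e, e⟫ := by
        have := ((nonneg_iff_isPositive _).mp hCM0).2 e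
        rwa [reApplyInnerSelf_apply] at this
      linarith
    have dF : re ⟪(C - M) f, f⟫ = 0 := by
      have hub : re ⟪(C - M) f, f⟫ ≤ 0 := by
        have h1 : re ⟪C f, f⟫ ≤ re ⟪A f, f⟫ := aux_inner_re_le hCA f
        have h2 : re ⟪A f, f⟫ - re ⟪M f, f⟫ = 0 := by
          have hop : A - M = cfc (fun τ => τ - m τ) A := by
            rw [cfc_sub (fun τ : ℝ => τ) m A (by fun_prop) hm_cont.continuousOn,
              cfc_id' ℝ A, hMdef]
          have h3 : re ⟪(A - M) f, f⟫ = 0 := by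
            rw [hop, hfdef, sand φf _ hφf_cont (by fun_prop) wf]
            rw [qzero _ ?hz wf wf, map_zero]
            case hz =>
              intro τ
              rcases eq_or_ne (φf τ) 0 with h | h
              · simp [h]
              · obtain ⟨hl, hr⟩ := suppF τ h
                have hmm : m τ = τ := min_eq_left (by linarith)
                rw [hmm]; ring
          rw [sub_apply, inner_sub_left, map_sub] at h3
          linarith
        have h4 : re ⟪(C - M) f, f⟫ = re ⟪C f, f⟫ - re ⟪M f, f⟫ := by
          rw [sub_apply, inner_sub_left, map_sub]
        linarith
      have hlb : 0 ≤ re ⟪(C - M) f, f⟫ := by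
        have := ((nonneg_iff_isPositive _).mp hCM0).2 f
        rwa [reApplyInnerSelf_apply] at this
      linarith
    -- square root identities
    have hsqE : ∀ τ, sq τ * hE τ = φe τ := by
      intro τ
      rcases le_or_gt (s - δ) τ with h | h
      · rw [hhE]
        simp only [max_eq_left h]
        rw [hsq, mul_comm, div_mul_cancel₀ _ (ne_of_gt (Real.sqrt_pos.mpr (by linarith)))]
      · have hzero : φe τ = 0 := by
          by_contra hne2
          have := (suppE τ hne2).1; linarith
        rw [hhE]; simp [hzero]
    have hsqF : ∀ τ, sq τ * hF τ = φf τ := by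
      intro τ
      rcases le_or_gt (t - δ) τ with h | h
      · rw [hhF]
        simp only [max_eq_left h]
        rw [hsq, mul_comm, div_mul_cancel₀ _ (ne_of_gt (Real.sqrt_pos.mpr (by linarith)))]
      · have hzero : φf τ = 0 := by
          by_contra hne2
          have := (suppF τ hne2).1; linarith
        rw [hhF]; simp [hzero]
    have hsq'E : ∀ τ, sq' τ * kE τ = φe τ := by
      intro τ
      rcases le_or_gt τ (s + δ) with h | h
      · rw [hkE]
        have hmax : max (1 - τ) (1 - s - δ) = 1 - τ := max_eq_left (by linarith)
        simp only [hmax]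
        rw [hsq', mul_comm, div_mul_cancel₀ _ (ne_of_gt (Real.sqrt_pos.mpr (by linarith)))]
      · have hzero : φe τ = 0 := by
          by_contra hne2
          have := (suppE τ hne2).2; linarith
        rw [hkE]; simp [hzero]
    have hsq'F : ∀ τ, sq' τ * kF τ = φf τ := by
      intro τ
      rcases le_or_gt τ (t + δ) with h | h
      · rw [hkF]
        have hmax : max (1 - τ) (1 - t - δ) = 1 - τ := max_eq_left (by linarith)
        simp only [hmax]
        rw [hsq', mul_comm, div_mul_cancel₀ _ (ne_of_gt (Real.sqrt_pos.mpr (by linarith)))]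
      · have hzero : φf τ = 0 := by
          by_contra hne2
          have := (suppF τ hne2).2; linarith
        rw [hkF]; simp [hzero]
    -- the vectors u, v and g
    set αc : ℂ := ((Real.sqrt x : ℝ) : ℂ) with hαc
    set βc : ℂ := ((Real.sqrt y : ℝ) : ℂ) with hβc
    set g : H := αc • e + βc • f with hgdef
    set u : H := αc • cfc hE A we + βc • cfc hF A wf with hudef
    set v : H := αc • cfc kE A we + βc • cfc kF A wf with hvdef
    have hgu : cfc sq A u = g := by
      rw [hudef, map_add, map_smul, map_smul, hgdef, hedef, hfdef]
      congr 1
      · congr 1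
        rw [aux_appmul A sq hE hsq_cont hE_cont we]
        rw [show cfc (fun τ => sq τ * hE τ) A = cfc φe A from cfc_congr fun τ _ => hsqE τ]
      · congr 1
        rw [aux_appmul A sq hF hsq_cont hF_cont wf]
        rw [show cfc (fun τ => sq τ * hF τ) A = cfc φf A from cfc_congr fun τ _ => hsqF τ]
    have hgv : cfc sq' A v = g := by
      rw [hvdef, map_add, map_smul, map_smul, hgdef, hedef, hfdef]
      congr 1
      · congr 1
        rw [aux_appmul A sq' kE hsq'_cont kE_cont we]
        rw [show cfc (fun τ => sq' τ * kE τ) A = cfc φe A from cfc_congr fun τ _ => hsq'E τ]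
      · congr 1
        rw [aux_appmul A sq' kF hsq'_cont kF_cont wf]
        rw [show cfc (fun τ => sq' τ * kF τ) A = cfc φf A from cfc_congr fun τ _ => hsq'F τ]
    -- norm bounds for u and v
    set S1 : ℝ := x * (s - δ)⁻¹ + y * (t - δ)⁻¹ with hS1
    set S2 : ℝ := x * (1 - s - δ)⁻¹ + y * (1 - t - δ)⁻¹ with hS2
    have hS1pos : 0 < S1 :=
      add_pos (mul_pos hx (inv_pos.mpr (by linarith))) (mul_pos hy (inv_pos.mpr (by linarith)))
    have hS2pos : 0 < S2 :=
      add_pos (mul_pos hx (inv_pos.mpr (by linarith))) (mul_pos hy (inv_pos.mpr (by linarith)))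
    have hdiag_bound : ∀ (p : ℝ → ℝ) (hp : Continuous p) (c : ℝ) (hc : 0 < c)
        (φ : ℝ → ℝ) (hφ : Continuous φ) (w : H),
        (∀ τ, p τ * p τ ≤ c⁻¹ * (φ τ * φ τ)) →
        re ⟪cfc (fun τ => φ τ * φ τ) A w, w⟫ = 1 →
        re ⟪cfc p A w, cfc p A w⟫ ≤ c⁻¹ := by
      intro p hp c hc φ hφ w hpt hquad
      rw [aux_pair A p p hp hp w w]
      calc re ⟪cfc (fun τ => p τ * p τ) A w, w⟫
          ≤ re ⟪cfc (fun τ => c⁻¹ * (φ τ * φ τ)) A w, w⟫ :=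
            qmono _ _ (hp.mul hp) (by fun_prop) hpt w
        _ = c⁻¹ := by rw [qscale _ (fun τ => φ τ * φ τ) (hφ.mul hφ) w w, hquad, mul_one]
    have sqbound : ∀ (φ : ℝ → ℝ), (∀ τ, 0 ≤ φ τ) → (∀ τ, φ τ ≤ 1) → ∀ (den : ℝ → ℝ) (c : ℝ),
        0 < c → (∀ τ, c ≤ den τ) →
        ∀ τ, (φ τ / Real.sqrt (den τ)) * (φ τ / Real.sqrt (den τ)) ≤ c⁻¹ * (φ τ * φ τ) := by
      intro φ hφ0 hφ1 den c hc hden τ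
      have hdpos : 0 < den τ := lt_of_lt_of_le hc (hden τ)
      have hrw : (φ τ / Real.sqrt (den τ)) * (φ τ / Real.sqrt (den τ))
          = (φ τ * φ τ) / den τ := by
        rw [div_mul_div_comm, Real.mul_self_sqrt hdpos.le]
      rw [hrw, div_eq_mul_inv, mul_comm]
      apply mul_le_mul_of_nonneg_right _ (mul_nonneg (hφ0 τ) (hφ0 τ))
      exact inv_anti₀ hc (hden τ)
    have hφe_le1 : ∀ τ, φe τ ≤ 1 := by
      intro τ
      rw [hφe]; unfold auxBump
      apply max_le (by norm_num)
      have : 0 ≤ |τ - s| / δ := div_nonneg (abs_nonneg _) hδ.le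
      linarith
    have hφf_le1 : ∀ τ, φf τ ≤ 1 := by
      intro τ
      rw [hφf]; unfold auxBump
      apply max_le (by norm_num)
      have : 0 ≤ |τ - t| / δ := div_nonneg (abs_nonneg _) hδ.le
      linarith
    have huE : re ⟪cfc hE A we, cfc hE A we⟫ ≤ (s - δ)⁻¹ :=
      hdiag_bound hE hE_cont (s - δ) (by linarith) φe hφe_cont we
        (sqbound φe hφe_nonneg hφe_le1 (fun τ => max τ (s - δ)) (s - δ) (by linarith)
          (fun τ => le_max_right _ _)) hee_cfc
    have huF : re ⟪cfc hF A wf, cfc hF A wf⟫ ≤ (t - δ)⁻¹ :=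
      hdiag_bound hF hF_cont (t - δ) (by linarith) φf hφf_cont wf
        (sqbound φf hφf_nonneg hφf_le1 (fun τ => max τ (t - δ)) (t - δ) (by linarith)
          (fun τ => le_max_right _ _)) hff_cfc
    have hvE : re ⟪cfc kE A we, cfc kE A we⟫ ≤ (1 - s - δ)⁻¹ :=
      hdiag_bound kE kE_cont (1 - s - δ) (by linarith) φe hφe_cont we
        (sqbound φe hφe_nonneg hφe_le1 (fun τ => max (1 - τ) (1 - s - δ)) (1 - s - δ)
          (by linarith) (fun τ => le_max_right _ _)) hee_cfc
    have hvF : re ⟪cfc kF A wf, cfc kF A wf⟫ ≤ (1 - t - δ)⁻¹ :=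
      hdiag_bound kF kF_cont (1 - t - δ) (by linarith) φf hφf_cont wf
        (sqbound φf hφf_nonneg hφf_le1 (fun τ => max (1 - τ) (1 - t - δ)) (1 - t - δ)
          (by linarith) (fun τ => le_max_right _ _)) hff_cfc
    -- cross terms vanish
    have hEzero : ∀ τ, φe τ = 0 → hE τ = 0 := fun τ h => by rw [hhE]; simp [h]
    have hFzero : ∀ τ, φf τ = 0 → hF τ = 0 := fun τ h => by rw [hhF]; simp [h]
    have kEzero : ∀ τ, φe τ = 0 → kE τ = 0 := fun τ h => by rw [hkE]; simp [h]
    have kFzero : ∀ τ, φf τ = 0 → kF τ = 0 := fun τ h => by rw [hkF]; simp [h]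
    have huEF : ⟪cfc hE A we, cfc hF A wf⟫ = 0 := by
      apply crossz0 hE hF hE_cont hF_cont
      intro τ
      rcases hdisj τ with h | h
      · rw [hEzero τ h, mul_zero]
      · rw [hFzero τ h, zero_mul]
    have huFE : ⟪cfc hF A wf, cfc hE A we⟫ = 0 := by
      apply crossz0 hF hE hF_cont hE_cont
      intro τ
      rcases hdisj τ with h | h
      · rw [hEzero τ h, zero_mul]
      · rw [hFzero τ h, mul_zero]
    have hvEF : ⟪cfc kE A we, cfc kF A wf⟫ = 0 := by
      apply crossz0 kE kF kE_cont kF_cont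
      intro τ
      rcases hdisj τ with h | h
      · rw [kEzero τ h, mul_zero]
      · rw [kFzero τ h, zero_mul]
    have hvFE : ⟪cfc kF A wf, cfc kE A we⟫ = 0 := by
      apply crossz0 kF kE kF_cont kE_cont
      intro τ
      rcases hdisj τ with h | h
      · rw [kEzero τ h, zero_mul]
      · rw [kFzero τ h, mul_zero]
    -- norm bounds
    have hu_norm : re ⟪u, u⟫ ≤ S1 := by
      rw [hudef, hαc, hβc,
        aux_re_comb2 _ _ _ _ huEF huFE (Real.sqrt x) (Real.sqrt y),
        Real.sq_sqrt hx.le, Real.sq_sqrt hy.le]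
      exact add_le_add (mul_le_mul_of_nonneg_left huE hx.le)
        (mul_le_mul_of_nonneg_left huF hy.le)
    have hv_norm : re ⟪v, v⟫ ≤ S2 := by
      rw [hvdef, hαc, hβc,
        aux_re_comb2 _ _ _ _ hvEF hvFE (Real.sqrt x) (Real.sqrt y),
        Real.sq_sqrt hx.le, Real.sq_sqrt hy.le]
      exact add_le_add (mul_le_mul_of_nonneg_left hvE hx.le)
        (mul_le_mul_of_nonneg_left hvF hy.le)
    -- the competitor operator D
    set lam : ℝ := min S1⁻¹ S2⁻¹ with hlam
    have hlampos : 0 < lam := lt_min (inv_pos.mpr hS1pos) (inv_pos.mpr hS2pos)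
    set D : H →L[ℂ] H := (lam : ℂ) • ((innerSL ℂ g).smulRight g) with hDdef
    have hDapp : ∀ z, D z = (lam : ℂ) • (⟪g, z⟫ • g) := by
      intro z
      rw [hDdef]
      simp [ContinuousLinearMap.smul_apply, ContinuousLinearMap.smulRight_apply, innerSL_apply_apply]
    have hDsa : IsSelfAdjoint D := by
      rw [isSelfAdjoint_iff_isSymmetric]
      intro z w
      show ⟪D z, w⟫ = ⟪z, D w⟫
      rw [hDapp, hDapp]
      simp only [inner_smul_left, inner_smul_right, Complex.conj_ofReal]
      rw [show (starRingEnd ℂ) ⟪g, z⟫ = ⟪z, g⟫ from inner_conj_symm z g]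
      ring
    have hDquad : ∀ z, re ⟪D z, z⟫ = lam * ‖⟪g, z⟫‖^2 := by
      intro z
      rw [hDapp z, inner_smul_left, inner_smul_left, Complex.conj_ofReal,
        ← Complex.normSq_eq_conj_mul_self, ← Complex.ofReal_mul]
      rw [show Complex.normSq ⟪g, z⟫ = ‖⟪g, z⟫‖^2 by
        rw [Complex.normSq_eq_norm_sq]]
      exact Complex.ofReal_re _
    have hD0 : 0 ≤ D := by
      rw [nonneg_iff_isPositive]
      refine ⟨isSelfAdjoint_iff_isSymmetric.mp hDsa, fun z => ?_⟩
      rw [reApplyInnerSelf_apply, hDquad z]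
      exact mul_nonneg hlampos.le (by positivity)
    -- quadratic forms of A and 1 - A via square roots
    have hAz : ∀ z : H, re ⟪A z, z⟫ = ‖cfc sq A z‖^2 := by
      intro z
      rw [← inner_self_eq_norm_sq (𝕜 := ℂ), aux_pair A sq sq hsq_cont hsq_cont z z]
      rw [show cfc (fun τ => sq τ * sq τ) A = A by
        rw [show cfc (fun τ => sq τ * sq τ) A = cfc (fun τ : ℝ => τ) A from
          cfc_congr fun τ hτ => by rw [hsq]; exact Real.mul_self_sqrt (spec0 τ hτ),
          cfc_id' ℝ A]]
    have hA'z : ∀ z : H, re ⟪(1 - A) z, z⟫ = ‖cfc sq' A z‖^2 := by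
      intro z
      rw [← inner_self_eq_norm_sq (𝕜 := ℂ), aux_pair A sq' sq' hsq'_cont hsq'_cont z z]
      rw [show cfc (fun τ => sq' τ * sq' τ) A = 1 - A by
        rw [show cfc (fun τ => sq' τ * sq' τ) A = cfc (fun τ : ℝ => 1 - τ) A from
          cfc_congr fun τ hτ => by
            rw [hsq']; exact Real.mul_self_sqrt (by have := spec1 τ hτ; linarith),
          hone_sub]]
    have hgz : ∀ z : H, ⟪g, z⟫ = ⟪u, cfc sq A z⟫ := by
      intro z
      rw [← hgu, aux_sa_inner (cfc_predicate sq A) u z]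
    have hgz' : ∀ z : H, ⟪g, z⟫ = ⟪v, cfc sq' A z⟫ := by
      intro z
      rw [← hgv, aux_sa_inner (cfc_predicate sq' A) v z]
    have hDA : D ≤ A := by
      rw [ContinuousLinearMap.le_def]
      refine ⟨isSelfAdjoint_iff_isSymmetric.mp (hsa.sub hDsa), fun z => ?_⟩
      rw [reApplyInnerSelf_apply, sub_apply, inner_sub_left, map_sub, sub_nonneg, hDquad z]
      have h2 : ‖⟪g, z⟫‖^2 ≤ ‖u‖^2 * ‖cfc sq A z‖^2 := by
        rw [hgz z]
        have hcs := norm_inner_le_norm (𝕜 := ℂ) u (cfc sq A z)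
        calc ‖⟪u, cfc sq A z⟫‖^2 ≤ (‖u‖ * ‖cfc sq A z‖)^2 :=
              pow_le_pow_left₀ (norm_nonneg _) hcs 2
          _ = ‖u‖^2 * ‖cfc sq A z‖^2 := by ring
      have h3 : lam * ‖u‖^2 ≤ 1 := by
        have hu2 : ‖u‖^2 ≤ S1 := by
          rw [← inner_self_eq_norm_sq (𝕜 := ℂ)]; exact hu_norm
        calc lam * ‖u‖^2 ≤ S1⁻¹ * S1 := by
              apply mul_le_mul (min_le_left _ _) hu2 (by positivity) (inv_pos.mpr hS1pos).le
          _ = 1 := inv_mul_cancel₀ (ne_of_gt hS1pos)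
      have h4 : (0:ℝ) ≤ ‖cfc sq A z‖^2 := by positivity
      rw [hAz z]
      calc lam * ‖⟪g, z⟫‖^2 ≤ lam * (‖u‖^2 * ‖cfc sq A z‖^2) :=
            mul_le_mul_of_nonneg_left h2 hlampos.le
        _ = (lam * ‖u‖^2) * ‖cfc sq A z‖^2 := by ring
        _ ≤ 1 * ‖cfc sq A z‖^2 := mul_le_mul_of_nonneg_right h3 h4
        _ = ‖cfc sq A z‖^2 := one_mul _
    have hDA' : D ≤ 1 - A := by
      rw [ContinuousLinearMap.le_def]
      refine ⟨isSelfAdjoint_iff_isSymmetric.mp ((IsSelfAdjoint.one (H →L[ℂ] H)).sub hsa |>.sub hDsa), fun z => ?_⟩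
      rw [reApplyInnerSelf_apply, sub_apply, inner_sub_left, map_sub, sub_nonneg, hDquad z]
      have h2 : ‖⟪g, z⟫‖^2 ≤ ‖v‖^2 * ‖cfc sq' A z‖^2 := by
        rw [hgz' z]
        have hcs := norm_inner_le_norm (𝕜 := ℂ) v (cfc sq' A z)
        calc ‖⟪v, cfc sq' A z⟫‖^2 ≤ (‖v‖ * ‖cfc sq' A z‖)^2 :=
              pow_le_pow_left₀ (norm_nonneg _) hcs 2
          _ = ‖v‖^2 * ‖cfc sq' A z‖^2 := by ring
      have h3 : lam * ‖v‖^2 ≤ 1 := by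
        have hv2 : ‖v‖^2 ≤ S2 := by
          rw [← inner_self_eq_norm_sq (𝕜 := ℂ)]; exact hv_norm
        calc lam * ‖v‖^2 ≤ S2⁻¹ * S2 := by
              apply mul_le_mul (min_le_right _ _) hv2 (by positivity) (inv_pos.mpr hS2pos).le
          _ = 1 := inv_mul_cancel₀ (ne_of_gt hS2pos)
      have h4 : (0:ℝ) ≤ ‖cfc sq' A z‖^2 := by positivity
      rw [hA'z z]
      calc lam * ‖⟪g, z⟫‖^2 ≤ lam * (‖v‖^2 * ‖cfc sq' A z‖^2) :=
            mul_le_mul_of_nonneg_left h2 hlampos.le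
        _ = (lam * ‖v‖^2) * ‖cfc sq' A z‖^2 := by ring
        _ ≤ 1 * ‖cfc sq' A z‖^2 := mul_le_mul_of_nonneg_right h3 h4
        _ = ‖cfc sq' A z‖^2 := one_mul _
    have hD1 : D ≤ 1 := hDA.trans hA1
    have hDC : D ≤ C := hglb D hD0 hD1 hDA hDA'
    -- evaluate everything at g and derive the contradiction
    have hgg_re : re ⟪g, g⟫ = x + y := by
      rw [hgdef, hαc, hβc, aux_re_comb2 e f e f hef hfe (Real.sqrt x) (Real.sqrt y),
        Real.sq_sqrt hx.le, Real.sq_sqrt hy.le, inner_self_eq_norm_sq (𝕜 := ℂ),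
        inner_self_eq_norm_sq (𝕜 := ℂ), he_norm, hf_norm]
      norm_num
    have hgg : ⟪g, g⟫ = ((x + y : ℝ) : ℂ) := by
      rw [← inner_self_ofReal_re g, hgg_re]
      norm_cast
    have hDgg : re ⟪D g, g⟫ = lam * (x + y)^2 := by
      rw [hDquad g]
      have hnorm : ‖⟪g, g⟫‖ = x + y := by
        rw [hgg, Complex.norm_real, Real.norm_eq_abs, abs_of_pos (by positivity)]
      rw [hnorm]
    have hstep1 : lam * (x + y)^2 ≤ re ⟪C g, g⟫ := by
      rw [← hDgg]; exact aux_inner_re_le hDC g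
    have hsplit : re ⟪C g, g⟫ = re ⟪M g, g⟫ + re ⟪(C - M) g, g⟫ := by
      rw [sub_apply, inner_sub_left, map_sub]; ring
    have hTg0 : re ⟪(C - M) g, g⟫ = 0 := by
      rw [hgdef]; exact aux_quad_zero hCM0 dE dF αc βc
    have hMgg : re ⟪M g, g⟫ ≤ x * (1 - s + δ) + y * (t + δ) := by
      have hexp : re ⟪M g, g⟫ = x * re ⟪M e, e⟫ + y * re ⟪M f, f⟫ := by
        rw [hgdef, map_add, map_smul, map_smul, hαc, hβc,
          aux_re_comb2 (M e) (M f) e f hMef hMfe (Real.sqrt x) (Real.sqrt y),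
          Real.sq_sqrt hx.le, Real.sq_sqrt hy.le]
      rw [hexp]
      exact add_le_add (mul_le_mul_of_nonneg_left hMe hx.le)
        (mul_le_mul_of_nonneg_left hMf hy.le)
    have hQ : x * (1 - s + δ) + y * (t + δ) < lam * (x + y)^2 := by
      have hc12 : (0:ℝ) < (s - δ) * (t - δ) := mul_pos (by linarith) (by linarith)
      have hd12 : (0:ℝ) < (1 - s - δ) * (1 - t - δ) := mul_pos (by linarith) (by linarith)
      have hsne : s - δ ≠ 0 := ne_of_gt (by linarith)
      have htne : t - δ ≠ 0 := ne_of_gt (by linarith)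
      have hsne' : 1 - s - δ ≠ 0 := ne_of_gt (by linarith)
      have htne' : 1 - t - δ ≠ 0 := ne_of_gt (by linarith)
      have hS1eq : x * (t - δ) + y * (s - δ) = S1 * ((s - δ) * (t - δ)) := by
        rw [hS1]; field_simp
      have hS2eq : x * (1 - t - δ) + y * (1 - s - δ) = S2 * ((1 - s - δ) * (1 - t - δ)) := by
        rw [hS2]; field_simp
      have h1 : (x * (1 - s + δ) + y * (t + δ)) * S1 < (x + y)^2 := by
        have h2 : ((x * (1 - s + δ) + y * (t + δ)) * S1) * ((s - δ) * (t - δ))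
            < ((x + y)^2) * ((s - δ) * (t - δ)) := by
          calc ((x * (1 - s + δ) + y * (t + δ)) * S1) * ((s - δ) * (t - δ))
              = (x * (1 - s + δ) + y * (t + δ)) * (S1 * ((s - δ) * (t - δ))) := by ring
            _ = (x * (1 - s + δ) + y * (t + δ)) * (x * (t - δ) + y * (s - δ)) := by
                rw [← hS1eq]
            _ < (s - δ) * (t - δ) * (x + y)^2 := K1
            _ = ((x + y)^2) * ((s - δ) * (t - δ)) := by ring
        exact lt_of_mul_lt_mul_right h2 hc12.le
      have h1' : x * (1 - s + δ) + y * (t + δ) < S1⁻¹ * (x + y)^2 := by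
        have := (lt_div_iff₀ hS1pos).mpr h1
        rwa [div_eq_inv_mul] at this
      have h2 : (x * (1 - s + δ) + y * (t + δ)) * S2 < (x + y)^2 := by
        have h3 : ((x * (1 - s + δ) + y * (t + δ)) * S2) * ((1 - s - δ) * (1 - t - δ))
            < ((x + y)^2) * ((1 - s - δ) * (1 - t - δ)) := by
          calc ((x * (1 - s + δ) + y * (t + δ)) * S2) * ((1 - s - δ) * (1 - t - δ))
              = (x * (1 - s + δ) + y * (t + δ)) * (S2 * ((1 - s - δ) * (1 - t - δ))) := by ring
            _ = (x * (1 - s + δ) + y * (t + δ)) * (x * (1 - t - δ) + y * (1 - s - δ)) := by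
                rw [← hS2eq]
            _ < (1 - s - δ) * (1 - t - δ) * (x + y)^2 := K2
            _ = ((x + y)^2) * ((1 - s - δ) * (1 - t - δ)) := by ring
        exact lt_of_mul_lt_mul_right h3 hd12.le
      have h2' : x * (1 - s + δ) + y * (t + δ) < S2⁻¹ * (x + y)^2 := by
        have := (lt_div_iff₀ hS2pos).mpr h2
        rwa [div_eq_inv_mul] at this
      have hmin : lam * (x + y)^2 = min (S1⁻¹ * (x + y)^2) (S2⁻¹ * (x + y)^2) := by
        rw [hlam, min_mul_of_nonneg _ _ (by positivity)]
      rw [hmin]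
      exact lt_min h1' h2'
    linarith [hstep1, hsplit, hTg0, hMgg, hQ]
  · rintro (h | h)
    · exact ⟨A, ⟨⟨hA0, hA1⟩, le_refl A, h, fun D _ _ hDA _ => hDA⟩⟩
    · refine ⟨1 - A, ⟨⟨sub_nonneg.mpr hA1, ?_⟩, h, le_refl _, fun D _ _ _ h' => h'⟩⟩
      calc 1 - A ≤ 1 - 0 := by
            apply sub_le_sub_left hA0
        _ = 1 := sub_zero 1
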